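/- Let 0 < α < 2 and let T be a non-singular automorphism of a σ-finite measure space (Ω, ℱ, μ), with multiplicative Maharam extension T̃_α on Ω × (0,∞) equipped with the measure m = μ ⊗ s^{-(1+α)}ds. Then for every nonnegative f ∈ L²(μ), every nonnegative g ∈ L²((0,∞), s^{-(1+α)}ds), and every n ≥ 1, ⟨(f ⊗ g) ∘ T̃_α^n, f ⊗ g⟩_{L²(m)} ≤ ‖g‖²_{L²(s^{-(1+α)}ds)} · ⟨U_T^n f, f⟩_{L²(μ)}, where (f ⊗ g)(ω, s) = f(ω)g(s). -/

import Mathlib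

/-- A standard Borel space equipped with a σ-finite-to-be measure and a
bi-measurable automorphism. -/
structure StdSystem : Type 1 where
  carrier : Type
  [meas : MeasurableSpace carrier]
  [borel : StandardBorelSpace carrier]
  μ : MeasureTheory.Measure carrier
  T : carrier ≃ᵐ carrier

attribute [instance] StdSystem.meas StdSystem.borel

open MeasureTheory Filter Set
open scoped ENNReal

noncomputable section

noncomputable section

/-- The left shift on two-sided real sequences. -/
def shiftZ : (ℤ → ℝ) → (ℤ → ℝ) := fun x n => x (n + 1)

/-- `T` is a non-singular automorphism of `(Ω, μ)`: the pushforward of `μ` by `T` is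
equivalent to `μ`. -/
def Nonsingular {Ω : Type*} [MeasurableSpace Ω] (T : Ω ≃ᵐ Ω) (μ : Measure Ω) : Prop :=
  Measure.map (⇑T) μ ≪ μ ∧ μ ≪ Measure.map (⇑T) μ

/-- `w_T = d((T⁻¹)_*μ)/dμ`, as a real-valued function. -/
def wgt {Ω : Type*} [MeasurableSpace Ω] (T : Ω ≃ᵐ Ω) (μ : Measure Ω) : Ω → ℝ :=
  fun ω => ((Measure.map (⇑T.symm) μ).rnDeriv μ ω).toReal

/-- `w_{T^n} = d((T^{-n})_*μ)/dμ`, as a real-valued function. -/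
def wgtn {Ω : Type*} [MeasurableSpace Ω] (T : Ω ≃ᵐ Ω) (μ : Measure Ω) (n : ℕ) : Ω → ℝ :=
  fun ω => ((Measure.map ((⇑T.symm)^[n]) μ).rnDeriv μ ω).toReal

/-- The measure `s^{-(1+α)} ds` on `(0,∞)`. -/
def mIoi (α : ℝ) : Measure ℝ :=
  (volume.restrict (Set.Ioi (0:ℝ))).withDensity fun s => ENNReal.ofReal (s ^ (-(1+α)))

/-- The measure `|s|^{-(1+α)} ds` on `ℝ ∖ {0}`. -/
def mSym (α : ℝ) : Measure ℝ :=
  (volume.restrict ({(0:ℝ)}ᶜ)).withDensity fun s => ENNReal.ofReal (|s| ^ (-(1+α)))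

/-- The multiplicative Maharam extension `T̃_α (ω, s) = (Tω, s ⬝ w_T(ω)^{1/α})`. -/
def Mah {Ω : Type*} [MeasurableSpace Ω] (α : ℝ) (T : Ω ≃ᵐ Ω) (μ : Measure Ω) :
    Ω × ℝ → Ω × ℝ :=
  fun p => (T p.1, p.2 * (wgt T μ p.1) ^ (1/α))

/-- The additive Maharam extension `T̃ (ω, s) = (Tω, s − log w_T(ω))`. -/
def MahAdd {Ω : Type*} [MeasurableSpace Ω] (T : Ω ≃ᵐ Ω) (μ : Measure Ω) :
    Ω × ℝ → Ω × ℝ :=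
  fun p => (T p.1, p.2 - Real.log (wgt T μ p.1))

/-- The measure `e^s ds` on `ℝ`. -/
def expMeasure : Measure ℝ := volume.withDensity fun s => ENNReal.ofReal (Real.exp s)

/-- An isomorphism of measure-preserving systems: a bi-measurable bijection `Φ` between
invariant conull subsets carrying `μ` to `ν` and conjugating `T` to `R`. -/
def IsMPIso {X Y : Type*} [MeasurableSpace X] [MeasurableSpace Y]
    (μ : Measure X) (ν : Measure Y) (T : X → X) (R : Y → Y) (Φ : X → Y) : Prop :=
  Measurable Φ ∧ Measure.map Φ μ = ν ∧
  ∃ (A : Set X) (B : Set Y) (Ψ : Y → X),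
    MeasurableSet A ∧ MeasurableSet B ∧ μ Aᶜ = 0 ∧ ν Bᶜ = 0 ∧
    T ⁻¹' A = A ∧ R ⁻¹' B = B ∧ Measurable Ψ ∧
    (∀ x ∈ A, Φ x ∈ B) ∧ (∀ y ∈ B, Ψ y ∈ A) ∧
    (∀ x ∈ A, Ψ (Φ x) = x) ∧ (∀ y ∈ B, Φ (Ψ y) = y) ∧
    (∀ x ∈ A, Φ (T x) = R (Φ x))

/-- A bi-measurable bijection between conull subsets. -/
def AEBij {X Y : Type*} [MeasurableSpace X] [MeasurableSpace Y]
    (μ : Measure X) (ν : Measure Y) (Φ : X → Y) : Prop :=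
  ∃ (A : Set X) (B : Set Y) (Ψ : Y → X),
    MeasurableSet A ∧ MeasurableSet B ∧ μ Aᶜ = 0 ∧ ν Bᶜ = 0 ∧ Measurable Ψ ∧
    (∀ x ∈ A, Φ x ∈ B) ∧ (∀ y ∈ B, Ψ y ∈ A) ∧
    (∀ x ∈ A, Ψ (Φ x) = x) ∧ (∀ y ∈ B, Φ (Ψ y) = y)

/-- `Q` is the Lévy measure of a stationary `α`-stable process on `ℝ^ℤ`. -/
def IsStableLevy (α : ℝ) (Q : Measure (ℤ → ℝ)) : Prop :=
  Measure.map shiftZ Q = Q ∧ Q {x | x = fun _ => 0} = 0 ∧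
  (∫⁻ x, ENNReal.ofReal (min ((x 0)^2) 1) ∂Q) < ⊤ ∧
  ∀ t : ℝ, 0 < t →
    Measure.map (fun x (n : ℤ) => t * x n) Q = ENNReal.ofReal (t ^ (-α)) • Q

/-- The truncation function `c(x) = max(−1, min(x,1))`. -/
def cutoff (x : ℝ) : ℝ := max (-1) (min x 1)

/-- `P` is the law of the stationary infinitely divisible process with Lévy measure `Q`,
as given by the Lévy–Khinchine formula. -/
def IsLevyLaw (Q P : Measure (ℤ → ℝ)) : Prop :=
  IsProbabilityMeasure P ∧ Measure.map shiftZ P = P ∧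
  ∀ (n₁ n₂ : ℤ), n₁ ≤ n₂ → ∀ a : ℤ → ℝ,
    Integrable (fun x : ℤ → ℝ =>
      Complex.exp (Complex.I * ((∑ k ∈ Finset.Icc n₁ n₂, a k * x k : ℝ) : ℂ)) - 1
        - Complex.I * ((∑ k ∈ Finset.Icc n₁ n₂, a k * cutoff (x k) : ℝ) : ℂ)) Q ∧
    (∫ x, Complex.exp (Complex.I * ((∑ k ∈ Finset.Icc n₁ n₂, a k * x k : ℝ) : ℂ)) ∂P)
      = Complex.exp (∫ x,
          (Complex.exp (Complex.I * ((∑ k ∈ Finset.Icc n₁ n₂, a k * x k : ℝ) : ℂ)) - 1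
            - Complex.I * ((∑ k ∈ Finset.Icc n₁ n₂, a k * cutoff (x k) : ℝ) : ℂ)) ∂Q)


/-! The `n`-th iterate of the Maharam extension is the skew product
`(ω, s) ↦ (Tⁿ ω, s · Cₙ(ω))` with `Cₙ = ∏_{k<n} (w_T ∘ T^k)^{1/α}`, and the chain rule for
Radon–Nikodym derivatives gives `Cₙ^α = w_{Tⁿ}` a.e. Since `s^{-(1+α)} ds` is multiplied by
`c^α` under `s ↦ c s`, Cauchy–Schwarz in the fibre gives `∫ g(c s) g(s) ≤ c^{α/2} ‖g‖²`, and
integrating over `ω` (Tonelli) yields the bound. The right-hand side is a genuine integral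
because `U_Tⁿ` is an isometry of `L²(μ)`. -/

open Function MeasureTheory Measure

section Nonsingular

variable {Ω : Type*} [MeasurableSpace Ω] {μ : Measure Ω} {T : Ω ≃ᵐ Ω}

lemma MeasurableEquiv.measurableEmbedding_iterate (e : Ω ≃ᵐ Ω) :
    ∀ n, MeasurableEmbedding (⇑e)^[n]
  | 0 => MeasurableEmbedding.id
  | n + 1 => (e.measurableEmbedding_iterate n).comp e.measurableEmbedding

lemma Nonsingular.quasiMeasurePreserving (hT : Nonsingular T μ) :
    QuasiMeasurePreserving T μ μ :=
  ⟨T.measurable, hT.1⟩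

lemma Nonsingular.symm (hT : Nonsingular T μ) : Nonsingular T.symm μ := by
  have h₁ := hT.2.map T.symm.measurable
  have h₂ := hT.1.map T.symm.measurable
  rw [MeasurableEquiv.map_symm_map] at h₁ h₂
  exact ⟨h₁, h₂⟩

lemma measurable_wgt (T : Ω ≃ᵐ Ω) (μ : Measure Ω) : Measurable (wgt T μ) :=
  (measurable_rnDeriv _ _).ennreal_toReal

lemma measurable_wgtn (T : Ω ≃ᵐ Ω) (μ : Measure Ω) (n : ℕ) : Measurable (wgtn T μ n) :=
  (measurable_rnDeriv _ _).ennreal_toReal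

lemma wgt_nonneg (T : Ω ≃ᵐ Ω) (μ : Measure Ω) (ω : Ω) : 0 ≤ wgt T μ ω :=
  ENNReal.toReal_nonneg

lemma wgtn_nonneg (T : Ω ≃ᵐ Ω) (μ : Measure Ω) (n : ℕ) (ω : Ω) : 0 ≤ wgtn T μ n ω :=
  ENNReal.toReal_nonneg

variable [SigmaFinite μ]

lemma ae_wgt_pos (hT : Nonsingular T μ) : ∀ᵐ ω ∂μ, 0 < wgt T μ ω := by
  have : SigmaFinite (μ.map T.symm) := T.symm.sigmaFinite_map
  filter_upwards [hT.symm.2.ae_le (rnDeriv_pos hT.symm.1), rnDeriv_lt_top (μ.map T.symm) μ]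
    with ω hpos hfin
  exact ENNReal.toReal_pos hpos.ne' hfin.ne

lemma rnDeriv_map_symm_iterate_succ (hT : Nonsingular T μ) (k : ℕ) :
    (μ.map (⇑T.symm)^[k + 1]).rnDeriv μ
      =ᵐ[μ] fun ω => (μ.map T.symm).rnDeriv μ ω * (μ.map (⇑T.symm)^[k]).rnDeriv μ (T ω) := by
  have : SigmaFinite (μ.map T.symm) := T.symm.sigmaFinite_map
  have : SigmaFinite (μ.map (⇑T.symm)^[k]) :=
    (T.symm.measurableEmbedding_iterate k).sigmaFinite_map
  have : SigmaFinite ((μ.map (⇑T.symm)^[k]).map T.symm) := T.symm.sigmaFinite_map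
  have hmap : μ.map (⇑T.symm)^[k + 1] = (μ.map (⇑T.symm)^[k]).map T.symm := by
    rw [map_map T.symm.measurable (T.symm.measurable.iterate k), iterate_succ']
  -- chain rule through `T.symm_* μ`; the first factor is transported from `T.symm^[k]_* μ ≪ μ`
  have hchain := rnDeriv_mul_rnDeriv (κ := μ)
    (((hT.symm.quasiMeasurePreserving.iterate k).absolutelyContinuous).map T.symm.measurable)
  have hshift := hT.quasiMeasurePreserving.ae
    (T.symm.measurableEmbedding.rnDeriv_map (μ.map (⇑T.symm)^[k]) μ)
  filter_upwards [hchain, hshift] with ω hω hω'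
  simp only [MeasurableEquiv.symm_apply_apply] at hω'
  rw [hmap, ← hω, Pi.mul_apply, hω', mul_comm]

lemma wgtn_ae_eq_prod (hT : Nonsingular T μ) (n : ℕ) :
    wgtn T μ n =ᵐ[μ] fun ω => ∏ k ∈ Finset.range n, wgt T μ ((⇑T)^[k] ω) := by
  induction n with
  | zero =>
    filter_upwards [rnDeriv_self μ] with ω hω
    simp [wgtn, hω]
  | succ k ih =>
    filter_upwards [rnDeriv_map_symm_iterate_succ hT k, hT.quasiMeasurePreserving.ae ih]
      with ω hω hω'
    simp only [wgtn] at hω' ⊢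
    rw [hω, ENNReal.toReal_mul, hω', Finset.prod_range_succ']
    simp only [iterate_succ_apply, iterate_zero_apply]
    exact mul_comm _ _

lemma integrable_wgtn_mul_comp_iterate (hT : Nonsingular T μ) (n : ℕ) {h : Ω → ℝ}
    (hh : Integrable h μ) : Integrable (fun ω => wgtn T μ n ω * h ((⇑T)^[n] ω)) μ := by
  have hS := T.symm.measurableEmbedding_iterate n
  have : SigmaFinite (μ.map (⇑T.symm)^[n]) := hS.sigmaFinite_map
  refine (integrable_toReal_rnDeriv_mul_iff
    (hT.symm.quasiMeasurePreserving.iterate n).absolutelyContinuous).2 ?_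
  rw [hS.integrable_map_iff]
  simpa [comp_def, (LeftInverse.iterate T.apply_symm_apply n _)] using hh

lemma memLp_sqrt_wgtn_mul_comp_iterate (hT : Nonsingular T μ) (n : ℕ) {f : Ω → ℝ}
    (hf : MemLp f 2 μ) : MemLp (fun ω => √(wgtn T μ n ω) * f ((⇑T)^[n] ω)) 2 μ := by
  refine (memLp_two_iff_integrable_sq ((measurable_wgtn T μ n).sqrt.aestronglyMeasurable.mul
    (hf.1.comp_quasiMeasurePreserving (hT.quasiMeasurePreserving.iterate n)))).2 ?_
  refine (integrable_wgtn_mul_comp_iterate hT n hf.integrable_sq).congr (ae_of_all _ fun ω => ?_)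
  simp only [Pi.mul_apply, comp_apply, mul_pow, Real.sq_sqrt (wgtn_nonneg T μ n ω)]

end Nonsingular

section ScalingMeasure

instance (α : ℝ) : SFinite (mIoi α) := by
  unfold mIoi
  infer_instance

lemma setLIntegral_Ioi_zero_eq_mul_comp_mul_right {c : ℝ} (hc : 0 < c) (H : ℝ → ℝ≥0∞) :
    ∫⁻ s in Ioi 0, H s = ENNReal.ofReal c * ∫⁻ s in Ioi 0, H (s * c) := by
  let e := MeasurableEquiv.mulRight₀ c hc.ne'
  have hpre : e ⁻¹' Ioi 0 = Ioi 0 := by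
    ext s
    exact mul_pos_iff_of_pos_right hc
  have hmap :
      (volume.restrict (Ioi (0 : ℝ))).map e = ENNReal.ofReal c⁻¹ • volume.restrict (Ioi 0) := by
    rw [← hpre, ← e.restrict_map, hpre, MeasurableEquiv.coe_mulRight₀,
      Real.map_volume_mul_right hc.ne', restrict_smul, abs_of_pos (inv_pos.mpr hc)]
  have hsub : ∫⁻ s in Ioi 0, H (s * c) = ENNReal.ofReal c⁻¹ * ∫⁻ s in Ioi 0, H s := by
    rw [← smul_eq_mul, ← lintegral_smul_measure, ← hmap, lintegral_map_equiv]
    rfl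
  rw [hsub, ← mul_assoc, ← ENNReal.ofReal_mul hc.le, mul_inv_cancel₀ hc.ne', ENNReal.ofReal_one,
    one_mul]

lemma lintegral_comp_mul_right_mIoi (α : ℝ) {c : ℝ} (hc : 0 < c) {h : ℝ → ℝ≥0∞}
    (hh : Measurable h) :
    ∫⁻ s, h (s * c) ∂mIoi α = ENNReal.ofReal (c ^ α) * ∫⁻ s, h s ∂mIoi α := by
  set ρ : ℝ → ℝ≥0∞ := fun s => ENNReal.ofReal (s ^ (-(1 + α)))
  have hρ : Measurable ρ := (measurable_id.pow_const _).ennreal_ofReal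
  have hρc : ∀ s > 0, ρ s = ENNReal.ofReal (c ^ α) * ENNReal.ofReal c * ρ (s * c) := by
    intro s hs
    have hcancel : c ^ α * c * c ^ (-(1 + α)) = 1 := by
      rw [← Real.rpow_add_one hc.ne', ← Real.rpow_add hc, show α + 1 + -(1 + α) = 0 by ring,
        Real.rpow_zero]
    simp only [ρ, ← ENNReal.ofReal_mul (Real.rpow_nonneg hc.le _),
      ← ENNReal.ofReal_mul (mul_nonneg (Real.rpow_nonneg hc.le _) hc.le),
      Real.mul_rpow hs.le hc.le]
    congr 1
    linear_combination (-(s ^ (-(1 + α)))) * hcancel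
  rw [mIoi, lintegral_withDensity_eq_lintegral_mul _ hρ (g := fun s => h (s * c))
      (hh.comp (measurable_mul_const c)),
    lintegral_withDensity_eq_lintegral_mul _ hρ hh,
    setLIntegral_Ioi_zero_eq_mul_comp_mul_right hc (ρ * h), ← mul_assoc,
    ← lintegral_const_mul' _ _ (ENNReal.mul_ne_top ENNReal.ofReal_ne_top ENNReal.ofReal_ne_top)]
  refine setLIntegral_congr_fun measurableSet_Ioi fun s hs => ?_
  simp only [Pi.mul_apply, hρc s hs, mul_assoc]

lemma lintegral_comp_mul_right_mul_le_mIoi (α : ℝ) {φ : ℝ → ℝ≥0∞} (hφ : Measurable φ)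
    {c : ℝ} (hc : 0 < c) :
    ∫⁻ s, φ (s * c) * φ s ∂mIoi α ≤ ENNReal.ofReal √(c ^ α) * ∫⁻ s, φ s ^ 2 ∂mIoi α := by
  have hscale := lintegral_comp_mul_right_mIoi α hc (hφ.pow_const 2)
  calc ∫⁻ s, φ (s * c) * φ s ∂mIoi α
      ≤ (∫⁻ s, φ (s * c) ^ (2 : ℝ) ∂mIoi α) ^ (1 / 2 : ℝ)
          * (∫⁻ s, φ s ^ (2 : ℝ) ∂mIoi α) ^ (1 / 2 : ℝ) :=
        ENNReal.lintegral_mul_le_Lp_mul_Lq _ Real.HolderConjugate.two_two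
          (hφ.comp (measurable_mul_const c)).aemeasurable hφ.aemeasurable
    _ = ENNReal.ofReal √(c ^ α) * ∫⁻ s, φ s ^ 2 ∂mIoi α := by
        simp only [ENNReal.rpow_two]
        rw [hscale, ENNReal.mul_rpow_of_nonneg _ _ (by norm_num), mul_assoc,
          ← ENNReal.rpow_add_of_nonneg _ _ (by norm_num) (by norm_num),
          ENNReal.ofReal_rpow_of_nonneg (Real.rpow_nonneg hc.le _) (by norm_num),
          Real.sqrt_eq_rpow]
        norm_num

lemma lintegral_prod_mIoi_comp_mul_le {Ω : Type*} [MeasurableSpace Ω] (μ : Measure Ω)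
    [SFinite μ] (α : ℝ) {a c : Ω → ℝ} (ha : Measurable a) (ha0 : ∀ ω, 0 ≤ a ω)
    (hc : Measurable c) (hc0 : ∀ᵐ ω ∂μ, 0 < c ω) {g : ℝ → ℝ} (hg : Measurable g)
    (hg0 : ∀ s, 0 ≤ g s) :
    ∫⁻ p, ENNReal.ofReal (a p.1 * (g (p.2 * c p.1) * g p.2)) ∂μ.prod (mIoi α)
      ≤ (∫⁻ s, ENNReal.ofReal (g s ^ 2) ∂mIoi α)
          * ∫⁻ ω, ENNReal.ofReal (√(c ω ^ α) * a ω) ∂μ := by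
  rw [lintegral_prod _ (by fun_prop), ← lintegral_const_mul _ (by fun_prop)]
  refine lintegral_mono_ae (hc0.mono fun ω hω => ?_)
  simp only [ENNReal.ofReal_mul (ha0 _), ENNReal.ofReal_mul (hg0 _),
    ENNReal.ofReal_mul (Real.sqrt_nonneg _), ENNReal.ofReal_pow (hg0 _)]
  rw [lintegral_const_mul _ (by fun_prop)]
  calc ENNReal.ofReal (a ω)
        * ∫⁻ s, ENNReal.ofReal (g (s * c ω)) * ENNReal.ofReal (g s) ∂mIoi α
      ≤ ENNReal.ofReal (a ω) * (ENNReal.ofReal √(c ω ^ α)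
          * ∫⁻ s, ENNReal.ofReal (g s) ^ 2 ∂mIoi α) := by
        gcongr
        exact lintegral_comp_mul_right_mul_le_mIoi α hg.ennreal_ofReal hω
    _ = _ := by ring

end ScalingMeasure

section Cocycle

variable {Ω : Type*} [MeasurableSpace Ω] {μ : Measure Ω} {T : Ω ≃ᵐ Ω}

def mahCocycle (α : ℝ) (T : Ω ≃ᵐ Ω) (μ : Measure Ω) (n : ℕ) (ω : Ω) : ℝ :=
  ∏ k ∈ Finset.range n, wgt T μ ((⇑T)^[k] ω) ^ (1 / α)

lemma mah_iterate_apply (α : ℝ) (T : Ω ≃ᵐ Ω) (μ : Measure Ω) (n : ℕ) (p : Ω × ℝ) :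
    (Mah α T μ)^[n] p = ((⇑T)^[n] p.1, p.2 * mahCocycle α T μ n p.1) := by
  induction n with
  | zero => simp [mahCocycle]
  | succ n ih =>
    rw [iterate_succ_apply', ih, iterate_succ_apply']
    simp only [Mah, mahCocycle, Finset.prod_range_succ, mul_assoc]

lemma measurable_mahCocycle (α : ℝ) (T : Ω ≃ᵐ Ω) (μ : Measure Ω) (n : ℕ) :
    Measurable (mahCocycle α T μ n) :=
  Finset.measurable_prod _ fun k _ =>
    ((measurable_wgt T μ).comp (T.measurable.iterate k)).pow_const _

variable [SigmaFinite μ]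

lemma ae_mahCocycle_pos (α : ℝ) (hT : Nonsingular T μ) (n : ℕ) :
    ∀ᵐ ω ∂μ, 0 < mahCocycle α T μ n ω := by
  have hpos : ∀ᵐ ω ∂μ, ∀ k, 0 < wgt T μ ((⇑T)^[k] ω) :=
    ae_all_iff.2 fun k => (hT.quasiMeasurePreserving.iterate k).ae (ae_wgt_pos hT)
  filter_upwards [hpos] with ω hω
  exact Finset.prod_pos fun k _ => Real.rpow_pos_of_pos (hω k) _

lemma mahCocycle_rpow_ae_eq_wgtn {α : ℝ} (hα : α ≠ 0) (hT : Nonsingular T μ) (n : ℕ) :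
    (fun ω => mahCocycle α T μ n ω ^ α) =ᵐ[μ] wgtn T μ n := by
  filter_upwards [wgtn_ae_eq_prod hT n] with ω hω
  rw [hω, mahCocycle, ← Real.finsetProd_rpow _ _ fun k _ => Real.rpow_nonneg (wgt_nonneg ..) _]
  refine Finset.prod_congr rfl fun k _ => ?_
  rw [← Real.rpow_mul (wgt_nonneg ..), one_div_mul_cancel hα, Real.rpow_one]

end Cocycle

theorem maharam_inner_product_bound_general
    {Ω : Type*} [MeasurableSpace Ω] (μ : Measure Ω) [SigmaFinite μ]
    (α : ℝ) (hα : 0 < α)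
    (T : Ω ≃ᵐ Ω) (hT : Nonsingular T μ)
    (f : Ω → ℝ) (hfm : Measurable f) (hf0 : ∀ ω, 0 ≤ f ω) (hf2 : MemLp f 2 μ)
    (g : ℝ → ℝ) (hgm : Measurable g) (hg0 : ∀ s, 0 ≤ g s) (hg2 : MemLp g 2 (mIoi α))
    (n : ℕ) :
    (∫ p, (f ((Mah α T μ)^[n] p).1 * g ((Mah α T μ)^[n] p).2) * (f p.1 * g p.2)
        ∂(μ.prod (mIoi α)))
      ≤ (∫ s, g s ^ 2 ∂(mIoi α)) *
          ∫ ω, Real.sqrt (wgtn T μ n ω) * f ((⇑T)^[n] ω) * f ω ∂μ := by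
  set C := mahCocycle α T μ n
  have hC : Measurable C := measurable_mahCocycle α T μ n
  have hUf : Integrable (fun ω => √(wgtn T μ n ω) * f ((⇑T)^[n] ω) * f ω) μ :=
    (memLp_sqrt_wgtn_mul_comp_iterate hT n hf2).integrable_mul hf2
  have hbound := lintegral_prod_mIoi_comp_mul_le μ α (a := fun ω => f ((⇑T)^[n] ω) * f ω)
    (by fun_prop) (fun ω => mul_nonneg (hf0 _) (hf0 _)) hC (ae_mahCocycle_pos α hT n) hgm hg0
  have hsqrt : (fun ω => ENNReal.ofReal (√(C ω ^ α) * (f ((⇑T)^[n] ω) * f ω)))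
      =ᵐ[μ] fun ω => ENNReal.ofReal (√(wgtn T μ n ω) * f ((⇑T)^[n] ω) * f ω) := by
    filter_upwards [mahCocycle_rpow_ae_eq_wgtn hα.ne' hT n] with ω hω
    rw [hω, mul_assoc]
  have hlhs : (fun p : Ω × ℝ =>
        (f ((Mah α T μ)^[n] p).1 * g ((Mah α T μ)^[n] p).2) * (f p.1 * g p.2))
      = fun p => f ((⇑T)^[n] p.1) * f p.1 * (g (p.2 * C p.1) * g p.2) := by
    ext p
    rw [mah_iterate_apply]
    ring
  rw [hlhs, integral_eq_lintegral_of_nonneg_ae (ae_of_all _ fun p =>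
      mul_nonneg (mul_nonneg (hf0 _) (hf0 _)) (mul_nonneg (hg0 _) (hg0 _))) (by fun_prop),
    integral_eq_lintegral_of_nonneg_ae (ae_of_all _ fun s => sq_nonneg _) (by fun_prop),
    integral_eq_lintegral_of_nonneg_ae (ae_of_all _ fun ω =>
      mul_nonneg (mul_nonneg (Real.sqrt_nonneg _) (hf0 _)) (hf0 _)) hUf.1,
    ← ENNReal.toReal_mul]
  exact ENNReal.toReal_mono
    (ENNReal.mul_ne_top hg2.integrable_sq.lintegral_lt_top.ne hUf.lintegral_lt_top.ne)
    (hbound.trans_eq (congrArg _ (lintegral_congr_ae hsqrt)))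

/-- Cauchy–Schwarz estimate for the Maharam extension: for nonnegative
`f ∈ L²(μ)`, `g ∈ L²(s^{-(1+α)}ds)` and `n ≥ 1`,
`⟨(f⊗g) ∘ T̃_α^n, f⊗g⟩ ≤ ‖g‖² ⟨U_T^n f, f⟩`. -/
theorem maharam_inner_product_bound
    {Ω : Type*} [MeasurableSpace Ω] (μ : Measure Ω) [SigmaFinite μ]
    (α : ℝ) (hα : 0 < α) (hα2 : α < 2)
    (T : Ω ≃ᵐ Ω) (hT : Nonsingular T μ)
    (f : Ω → ℝ) (hfm : Measurable f) (hf0 : ∀ ω, 0 ≤ f ω) (hf2 : MemLp f 2 μ)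
    (g : ℝ → ℝ) (hgm : Measurable g) (hg0 : ∀ s, 0 ≤ g s) (hg2 : MemLp g 2 (mIoi α))
    (n : ℕ) (hn : 1 ≤ n) :
    (∫ p, (f ((Mah α T μ)^[n] p).1 * g ((Mah α T μ)^[n] p).2) * (f p.1 * g p.2)
        ∂(μ.prod (mIoi α)))
      ≤ (∫ s, g s ^ 2 ∂(mIoi α)) *
          ∫ ω, Real.sqrt (wgtn T μ n ω) * f ((⇑T)^[n] ω) * f ω ∂μ :=
  maharam_inner_product_bound_general μ α hα T hT f hfm hf0 hf2 g hgm hg0 hg2 n
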